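/- Let ρ: B ↠ Γ be a Fell bundle and f, g finitely supported sections. For every γ ∈ Γ, the convolution fg satisfies ‖fg(γ)‖ ≤ √(‖ff*(r(γ))‖ · ‖g*g(s(γ))‖). -/

import Mathlib

open Filter Topology

/-- An étale groupoid: a groupoid (partial multiplication encoded via `Option`,
with inverse, source and range maps) carrying a topology making inversion and
multiplication continuous, with open source map and a basis of open slices. -/
structure EtaleGroupoid (Γ : Type*) [TopologicalSpace Γ] where
  mul : Γ → Γ → Option Γ
  inv : Γ → Γ
  s : Γ → Γ
  r : Γ → Γ
  s_unit : ∀ γ, mul γ (s γ) = some γ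
  r_unit : ∀ γ, mul (r γ) γ = some γ
  mul_isSome : ∀ a b, (mul a b).isSome ↔ s a = r b
  inv_mul : ∀ γ, mul (inv γ) γ = some (s γ)
  mul_inv : ∀ γ, mul γ (inv γ) = some (r γ)
  inv_inv : ∀ γ, inv (inv γ) = γ
  s_inv : ∀ γ, s (inv γ) = r γ
  r_inv : ∀ γ, r (inv γ) = s γ
  s_s : ∀ γ, s (s γ) = s γ
  r_s : ∀ γ, r (s γ) = s γ
  inv_s : ∀ γ, inv (s γ) = s γ
  s_r : ∀ γ, s (r γ) = r γ
  r_r : ∀ γ, r (r γ) = r γ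
  inv_r : ∀ γ, inv (r γ) = r γ
  mul_s_s : ∀ γ, mul (s γ) (s γ) = some (s γ)
  mul_r_r : ∀ γ, mul (r γ) (r γ) = some (r γ)
  s_eq_r : ∀ {a b c}, mul a b = some c → s a = r b
  s_mul : ∀ {a b c}, mul a b = some c → s c = s b
  r_mul : ∀ {a b c}, mul a b = some c → r c = r a
  inv_mul_inv : ∀ {a b c}, mul a b = some c → mul (inv b) (inv a) = some (inv c)
  mul_assoc' : ∀ {a b c p q pc}, mul a b = some p → mul b c = some q →
    mul p c = some pc → mul a q = some pc
  continuous_inv : Continuous inv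
  continuous_s : Continuous s
  continuous_r : Continuous r
  isOpenMap_s : IsOpenMap s
  continuous_mul : Continuous fun p : {p : Γ × Γ // (mul p.1 p.2).isSome} =>
    (mul p.1.1 p.1.2).get p.2
  etale : ∀ γ : Γ, ∃ O : Set Γ, IsOpen O ∧ γ ∈ O ∧ Set.InjOn s O ∧ Set.InjOn r O

open scoped ENNReal NNReal

variable {Γ : Type*} [TopologicalSpace Γ]

/-- The unit space `Γ⁰` of an étale groupoid. -/
def EtaleGroupoid.units (G : EtaleGroupoid Γ) : Set Γ := Set.range G.s

/-- A slice: a subset on which both the source and range maps are injective. -/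
def EtaleGroupoid.IsSlice (G : EtaleGroupoid Γ) (B : Set Γ) : Prop :=
  Set.InjOn G.s B ∧ Set.InjOn G.r B

/-- Transport along an equality of base points between fibres. -/
def castE {X : Type*} {E : X → Type*} {α β : X} (h : α = β) (a : E α) : E β := h ▸ a

/-- A Fell bundle over an étale groupoid `G` on `Γ`: a Banach bundle whose
total space `Σ γ, E γ` is a topological *-semigroupoid over `Γ` with bilinear
products, antilinear involution, submultiplicative norm, the C*-identity
`‖b*b‖ = ‖b‖²`, and every `b*b` a square `a*a` of an element of the unit
fibre over `s(ρ(b))`. -/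
structure FellBundle {Γ : Type*} [TopologicalSpace Γ] (G : EtaleGroupoid Γ)
    (E : Γ → Type*) [∀ γ, NormedAddCommGroup (E γ)] [∀ γ, NormedSpace ℂ (E γ)]
    [∀ γ, CompleteSpace (E γ)] [TopologicalSpace (Σ γ, E γ)] where
  mul : ∀ {α β γ : Γ}, G.mul α β = some γ → E α → E β → E γ
  star : ∀ {γ : Γ}, E γ → E (G.inv γ)
  mul_add : ∀ {α β γ} (h : G.mul α β = some γ) (a : E α) (b c : E β),
      mul h a (b + c) = mul h a b + mul h a c
  add_mul : ∀ {α β γ} (h : G.mul α β = some γ) (a b : E α) (c : E β),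
      mul h (a + b) c = mul h a c + mul h b c
  smul_mul : ∀ {α β γ} (h : G.mul α β = some γ) (z : ℂ) (a : E α) (b : E β),
      mul h (z • a) b = z • mul h a b
  mul_smul : ∀ {α β γ} (h : G.mul α β = some γ) (z : ℂ) (a : E α) (b : E β),
      mul h a (z • b) = z • mul h a b
  mul_assoc : ∀ {a b c p q pc} (h1 : G.mul a b = some p) (h2 : G.mul b c = some q)
      (h3 : G.mul p c = some pc) (x : E a) (y : E b) (z : E c),
      mul h3 (mul h1 x y) z = mul (G.mul_assoc' h1 h2 h3) x (mul h2 y z)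
  star_add : ∀ {γ} (a b : E γ), star (a + b) = star a + star b
  star_smul : ∀ {γ} (z : ℂ) (a : E γ), star (z • a) = (starRingEnd ℂ z) • star a
  star_star : ∀ {γ} (a : E γ), star (star a) = castE (G.inv_inv γ).symm a
  star_mul : ∀ {α β γ} (h : G.mul α β = some γ) (a : E α) (b : E β),
      star (mul h a b) = mul (G.inv_mul_inv h) (star b) (star a)
  norm_mul_le : ∀ {α β γ} (h : G.mul α β = some γ) (a : E α) (b : E β),
      ‖mul h a b‖ ≤ ‖a‖ * ‖b‖
  norm_star : ∀ {γ} (a : E γ), ‖star a‖ = ‖a‖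
  cstar : ∀ {γ} (b : E γ), ‖mul (G.inv_mul γ) (star b) b‖ = ‖b‖ ^ 2
  exists_sq : ∀ {γ} (b : E γ), ∃ a : E (G.s γ),
      mul (G.mul_s_s γ) (castE (G.inv_s γ) (star a)) a = mul (G.inv_mul γ) (star b) b
  continuous_proj : Continuous (Sigma.fst : (Σ γ, E γ) → Γ)
  isOpenMap_proj : IsOpenMap (Sigma.fst : (Σ γ, E γ) → Γ)
  continuous_smul : ∀ z : ℂ, Continuous (fun b : Σ γ, E γ => (⟨b.1, z • b.2⟩ : Σ γ, E γ))
  continuous_add : Continuous (fun p : {p : (Σ γ, E γ) × (Σ γ, E γ) // p.1.1 = p.2.1} =>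
      (⟨p.1.1.1, p.1.1.2 + castE p.2.symm p.1.2.2⟩ : Σ γ, E γ))
  usc_norm : UpperSemicontinuous (fun b : Σ γ, E γ => ‖b.2‖)
  zero_lim : ∀ (l : Filter (Σ γ, E γ)) (x : Γ), Tendsto Sigma.fst l (𝓝 x) →
      Tendsto (fun b : Σ γ, E γ => ‖b.2‖) l (𝓝 (0 : ℝ)) →
      l ≤ 𝓝 (⟨x, 0⟩ : Σ γ, E γ)
  continuous_mul' : Continuous
      (fun p : {p : (Σ γ, E γ) × (Σ γ, E γ) // (G.mul p.1.1 p.2.1).isSome} =>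
        (⟨(G.mul p.1.1.1 p.1.2.1).get p.2,
          mul (Option.some_get p.2).symm p.1.1.2 p.1.2.2⟩ : Σ γ, E γ))
  continuous_star' : Continuous (fun b : Σ γ, E γ => (⟨G.inv b.1, star b.2⟩ : Σ γ, E γ))

namespace FellBundle

variable {G : EtaleGroupoid Γ} {E : Γ → Type*}
  [∀ γ, NormedAddCommGroup (E γ)] [∀ γ, NormedSpace ℂ (E γ)]
  [∀ γ, CompleteSpace (E γ)] [TopologicalSpace (Σ γ, E γ)]

/-- The convolution product of two sections: `ab(γ) = Σ_{γ=αβ} a(α)b(β)`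
(a `tsum`, i.e. junk value `0` if the sum does not converge unconditionally). -/
noncomputable def conv (F : FellBundle G E) (a b : ∀ γ, E γ) (γ : Γ) : E γ :=
  ∑' p : {p : Γ × Γ // G.mul p.1 p.2 = some γ}, F.mul p.2 (a p.1.1) (b p.1.2)

/-- The convolution product `ab` is defined: at each `γ` the net of finite
partial sums of `a(α)b(β)` over `γ = αβ` converges in the fibre `E γ`. -/
def ConvDefined (F : FellBundle G E) (a b : ∀ γ, E γ) : Prop :=
  ∀ γ : Γ, Summable (fun p : {p : Γ × Γ // G.mul p.1 p.2 = some γ} =>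
    F.mul p.2 (a p.1.1) (b p.1.2))

/-- The involution of sections: `a*(γ) = a(γ⁻¹)*`. -/
noncomputable def starSec (F : FellBundle G E) (a : ∀ γ, E γ) (γ : Γ) : E γ :=
  castE (G.inv_inv γ) (F.star (a (G.inv γ)))

/-- The pointwise *-square `a(γ)*a(γ) ∈ E (s γ)`. -/
noncomputable def starSq (F : FellBundle G E) (a : ∀ γ, E γ) (γ : Γ) : E (G.s γ) :=
  F.mul (G.inv_mul γ) (F.star (a γ)) (a γ)

/-- The (possibly infinite) supremum norm `‖a‖_∞` of a section. -/
noncomputable def supNorm (_F : FellBundle G E) (a : ∀ γ, E γ) : ℝ≥0∞ :=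
  ⨆ γ : Γ, (‖a γ‖₊ : ℝ≥0∞)

/-- The (possibly infinite) 2-norm
`‖a‖₂ = sup_{x} sup_{F ⊂ Γx finite} √‖Σ_{γ∈F} a(γ)*a(γ)‖`. -/
noncomputable def twoNorm (F : FellBundle G E) (a : ∀ γ, E γ) : ℝ≥0∞ :=
  ⨆ x : Γ, ⨆ s : Finset {γ : Γ // G.s γ = x},
    ENNReal.ofReal (Real.sqrt ‖∑ γ ∈ s, castE γ.prop (F.starSq a γ.val)‖)

/-- The (possibly infinite) 1-norm `‖a‖₁ = sup_{x∈Γ⁰} Σ_{γ∈Γx} ‖a(γ)‖`. -/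
noncomputable def oneNorm (_F : FellBundle G E) (a : ∀ γ, E γ) : ℝ≥0∞ :=
  ⨆ x : Γ, ∑' γ : {γ : Γ // G.s γ = x}, (‖a γ.val‖₊ : ℝ≥0∞)

/-- The (possibly infinite) b-norm
`‖a‖_b = sup {‖af‖₂/‖f‖₂ : f finitely supported}` (with `0/0 = 0`). -/
noncomputable def bNorm (F : FellBundle G E) (a : ∀ γ, E γ) : ℝ≥0∞ :=
  ⨆ f : {f : ∀ γ, E γ // {γ | f γ ≠ 0}.Finite},
    F.twoNorm (F.conv a f.val) / F.twoNorm f.val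

/-- Positivity in the C*-algebra unit fibre `E (s γ)`: being of the form `c*c`. -/
def posAt (F : FellBundle G E) (γ : Γ) (p : E (G.s γ)) : Prop :=
  ∃ c : E (G.s γ), p = F.mul (G.mul_s_s γ) (castE (G.inv_s γ) (F.star c)) c

/-- Positivity in the C*-algebra unit fibre `E (r γ)`: being of the form `c*c`. -/
def posAtR (F : FellBundle G E) (γ : Γ) (p : E (G.r γ)) : Prop :=
  ∃ c : E (G.r γ), p = F.mul (G.mul_r_r γ) (castE (G.inv_r γ) (F.star c)) c

end FellBundle

open Classical in
/-- The 0-restriction `a_Δ` of a section: equal to `a` on `Δ` and `0` elsewhere. -/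
noncomputable def restrictSec {Γ : Type*} {E : Γ → Type*} [∀ γ, NormedAddCommGroup (E γ)]
    (Δ : Set Γ) (a : ∀ γ, E γ) (γ : Γ) : E γ :=
  if γ ∈ Δ then a γ else 0

variable {Γ : Type*} [TopologicalSpace Γ] {G : EtaleGroupoid Γ} {E : Γ → Type*}
  [∀ γ, NormedAddCommGroup (E γ)] [∀ γ, NormedSpace ℂ (E γ)]
  [∀ γ, CompleteSpace (E γ)] [TopologicalSpace (Σ γ, E γ)]

/-!
Write `x = fg(γ) = Σ_β f(γβ⁻¹) g(β)`, the sum running over the arrows `β` with `s β = s γ`, and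
put `v_β = f(γβ⁻¹)* x ∈ E β`. The pairing `⟨u, w⟩ = Σ_β u_β* w_β` is a positive sesquilinear
form with values in the C⋆-algebra `E (s γ)`, and by associativity
`⟨v, g⟩ = ⟨g, v⟩ = x* x`, `⟨v, v⟩ = x* (ff*(r γ)) x` and `⟨g, g⟩ = g*g(s γ)`.
Expanding `0 ≤ ⟨θv - g, θv - g⟩` for real `θ` and taking norms gives the Cauchy–Schwarz bound
`‖x* x‖² ≤ ‖⟨v, v⟩‖ ‖⟨g, g⟩‖ ≤ ‖ff*(r γ)‖ ‖x‖² ‖g*g(s γ)‖`, and `‖x* x‖ = ‖x‖²`.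
-/

theorem norm_sq_le_mul_of_sesquilinear {A M : Type*} [NonUnitalCStarAlgebra A] [PartialOrder A]
    [StarOrderedRing A] [AddCommGroup M] [Module ℂ M] (B : M →ₗ⋆[ℂ] M →ₗ[ℂ] A)
    (hB : ∀ m, 0 ≤ B m m) {v w : M} (hvw : B w v = B v w) (hR : 0 ≤ B v w) :
    ‖B v w‖ ^ 2 ≤ ‖B v v‖ * ‖B w w‖ := by
  have hquad : ∀ θ : ℝ, 0 ≤ ‖B v v‖ * (θ * θ) + (-2 * ‖B v w‖) * θ + ‖B w w‖ := by
    intro θ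
    rcases le_or_gt θ 0 with hθ | hθ
    · nlinarith [norm_nonneg (B v v), norm_nonneg (B v w), norm_nonneg (B w w)]
    have hexp : B ((θ : ℂ) • v - w) ((θ : ℂ) • v - w) =
        (θ ^ 2 • B v v + B w w) - (2 * θ) • B v w := by
      simp only [map_sub, map_smulₛₗ, LinearMap.sub_apply, LinearMap.smul_apply,
        Complex.conj_ofReal, RingHom.id_apply, hvw]
      simp only [Complex.coe_smul]
      module
    have hle : (2 * θ) • B v w ≤ θ ^ 2 • B v v + B w w := sub_nonneg.1 (hexp ▸ hB _)
    have hnorm := (CStarAlgebra.norm_le_norm_of_nonneg_of_le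
      (smul_nonneg (by positivity) hR) hle).trans (norm_add_le _ _)
    rw [norm_smul, norm_smul, Real.norm_of_nonneg (by positivity),
      Real.norm_of_nonneg (by positivity)] at hnorm
    nlinarith
  have := discrim_le_zero hquad
  rw [discrim] at this
  nlinarith

section Cast

variable {X : Type*} {D : X → Type*}

@[simp] theorem castE_castE {α β δ : X} (h₁ : α = β) (h₂ : β = δ) (a : D α) :
    castE (E := D) h₂ (castE h₁ a) = castE (h₁.trans h₂) a := by
  subst h₁ h₂; rfl

@[simp] theorem castE_self {α : X} (h : α = α) (a : D α) : castE (E := D) h a = a := rfl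

@[simp] theorem norm_castE [∀ x, Norm (D x)] {α β : X} (h : α = β) (a : D α) :
    ‖castE (E := D) h a‖ = ‖a‖ := by
  subst h; rfl

@[simp] theorem castE_add [∀ x, Add (D x)] {α β : X} (h : α = β) (a b : D α) :
    castE (E := D) h (a + b) = castE h a + castE h b := by
  subst h; rfl

@[simp] theorem castE_smul [∀ x, SMul ℂ (D x)] {α β : X} (h : α = β) (z : ℂ) (a : D α) :
    castE (E := D) h (z • a) = z • castE h a := by
  subst h; rfl

end Cast

namespace EtaleGroupoid

theorem inv_mul_eq_of_mul_eq {α β γ : Γ} (h : G.mul α β = some γ) :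
    G.mul (G.inv α) γ = some β := by
  have hβ : G.mul (G.s α) β = some β := by rw [G.s_eq_r h]; exact G.r_unit β
  exact G.mul_assoc' (G.inv_mul α) h hβ

theorem mul_inv_eq_of_mul_eq {α β γ : Γ} (h : G.mul α β = some γ) :
    G.mul γ (G.inv β) = some α := by
  obtain ⟨δ, hδ⟩ := Option.isSome_iff_exists.1 <|
    (G.mul_isSome γ (G.inv β)).2 (by rw [G.r_inv, G.s_mul h])
  have hα := G.mul_assoc' h (G.mul_inv β) hδ
  rw [← G.s_eq_r h, G.s_unit α] at hα
  rw [hδ, hα]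

theorem eq_inv_of_mul_eq_r {α β : Γ} (h : G.mul α β = some (G.r α)) : β = G.inv α := by
  have hinv : G.mul (G.inv α) (G.r α) = some (G.inv α) := by
    simpa only [G.s_inv] using G.s_unit (G.inv α)
  exact Option.some_inj.1 ((G.inv_mul_eq_of_mul_eq h).symm.trans hinv)

theorem eq_inv_of_mul_eq_s {α β : Γ} (h : G.mul α β = some (G.s β)) : α = G.inv β := by
  have hinv : G.mul (G.s β) (G.inv β) = some (G.inv β) := by
    simpa only [G.r_inv] using G.r_unit (G.inv β)
  exact Option.some_inj.1 ((G.mul_inv_eq_of_mul_eq h).symm.trans hinv)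

theorem inv_mul_of_s_eq {β u : Γ} (h : G.s β = u) : G.mul (G.inv β) β = some u :=
  h ▸ G.inv_mul β

def mulInv (γ β : Γ) (h : G.s β = G.s γ) : Γ :=
  (G.mul γ (G.inv β)).get ((G.mul_isSome _ _).2 (by rw [G.r_inv, h]))

theorem mul_inv_eq_mulInv {γ β : Γ} (h : G.s β = G.s γ) :
    G.mul γ (G.inv β) = some (G.mulInv γ β h) :=
  (Option.some_get _).symm

theorem mulInv_mul {γ β : Γ} (h : G.s β = G.s γ) : G.mul (G.mulInv γ β h) β = some γ := by
  simpa only [G.inv_inv] using G.mul_inv_eq_of_mul_eq (G.mul_inv_eq_mulInv h)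

theorem r_mulInv {γ β : Γ} (h : G.s β = G.s γ) : G.r (G.mulInv γ β h) = G.r γ :=
  (G.r_mul (G.mulInv_mul h)).symm

section

variable (G) (γ : Γ)

theorem bijective_mulInv_pair :
    Function.Bijective fun β : {β : Γ // G.s β = G.s γ} =>
      (⟨(G.mulInv γ β.1 β.2, β.1), G.mulInv_mul β.2⟩ : {p : Γ × Γ // G.mul p.1 p.2 = some γ}) := by
  refine ⟨fun β β' h => Subtype.ext (congrArg (·.1.2) h), fun ⟨(α, β), h⟩ => ?_⟩
  refine ⟨⟨β, (G.s_mul h).symm⟩, Subtype.ext (Prod.ext ?_ rfl)⟩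
  exact Option.some_inj.1
    ((G.mul_inv_eq_mulInv (G.s_mul h).symm).symm.trans (G.mul_inv_eq_of_mul_eq h))

theorem mulInv_mul_inv {β : Γ} (h : G.s β = G.s γ) :
    G.mul (G.mulInv γ β h) (G.inv (G.mulInv γ β h)) = some (G.r γ) :=
  G.r_mulInv h ▸ G.mul_inv _

theorem mulInv_injective :
    Function.Injective fun β : {β : Γ // G.s β = G.s γ} => G.mulInv γ β.1 β.2 := by
  intro β β' h
  have hβ := G.inv_mul_eq_of_mul_eq (G.mulInv_mul β.2)
  rw [show G.mulInv γ β.1 β.2 = G.mulInv γ β'.1 β'.2 from h,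
    G.inv_mul_eq_of_mul_eq (G.mulInv_mul β'.2)] at hβ
  exact Subtype.ext (Option.some_inj.1 hβ).symm

theorem bijective_mulInv_inv_pair :
    Function.Bijective fun β : {β : Γ // G.s β = G.s γ} =>
      (⟨(G.mulInv γ β.1 β.2, G.inv (G.mulInv γ β.1 β.2)), G.mulInv_mul_inv γ β.2⟩ :
        {p : Γ × Γ // G.mul p.1 p.2 = some (G.r γ)}) := by
  refine ⟨fun β β' h => G.mulInv_injective γ (congrArg (·.1.1) h), fun ⟨(α, α'), h⟩ => ?_⟩
  have hr : G.r α = G.r γ := by simpa only [G.r_r] using (G.r_mul h).symm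
  obtain ⟨β, hβ⟩ := Option.isSome_iff_exists.1 <|
    (G.mul_isSome (G.inv α) γ).2 (by rw [G.s_inv, hr])
  have hαβ : G.mul α β = some γ := by simpa only [G.inv_inv] using G.inv_mul_eq_of_mul_eq hβ
  have hmulInv : G.mulInv γ β (G.s_mul hβ) = α :=
    Option.some_inj.1 ((G.mul_inv_eq_mulInv _).symm.trans (G.mul_inv_eq_of_mul_eq hαβ))
  refine ⟨⟨β, G.s_mul hβ⟩, Subtype.ext (Prod.ext hmulInv ?_)⟩
  have hα' : α' = G.inv α := G.eq_inv_of_mul_eq_r (by rw [hr]; exact h)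
  exact (congrArg G.inv hmulInv).trans hα'.symm

theorem bijective_inv_pair :
    Function.Bijective fun β : {β : Γ // G.s β = G.s γ} =>
      (⟨(G.inv β.1, β.1), G.inv_mul_of_s_eq β.2⟩ :
        {p : Γ × Γ // G.mul p.1 p.2 = some (G.s γ)}) := by
  refine ⟨fun β β' h => Subtype.ext (congrArg (·.1.2) h), fun ⟨(α, β), h⟩ => ?_⟩
  have hs : G.s β = G.s γ := by simpa only [G.s_s] using (G.s_mul h).symm
  have hα : α = G.inv β := G.eq_inv_of_mul_eq_s (by rw [hs]; exact h)
  exact ⟨⟨β, hs⟩, Subtype.ext (Prod.ext hα.symm rfl)⟩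

end

end EtaleGroupoid

namespace FellBundle

variable (F : FellBundle G E)

def mulₗ {α β γ : Γ} (h : G.mul α β = some γ) : E α →ₗ[ℂ] E β →ₗ[ℂ] E γ :=
  LinearMap.mk₂ ℂ (F.mul h) (F.add_mul h) (F.smul_mul h) (F.mul_add h) (F.mul_smul h)

def starₗ {γ : Γ} : E γ →ₗ⋆[ℂ] E (G.inv γ) where
  toFun := F.star
  map_add' := F.star_add
  map_smul' := F.star_smul

@[simp] theorem mul_zero {α β γ : Γ} (h : G.mul α β = some γ) (a : E α) :
    F.mul h a 0 = 0 :=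
  (F.mulₗ h a).map_zero

@[simp] theorem zero_mul {α β γ : Γ} (h : G.mul α β = some γ) (b : E β) :
    F.mul h 0 b = 0 :=
  LinearMap.map_zero₂ (F.mulₗ h) b

theorem mul_sum {ι : Type*} {α β γ : Γ} (h : G.mul α β = some γ) (a : E α)
    (T : Finset ι) (b : ι → E β) :
    F.mul h a (∑ i ∈ T, b i) = ∑ i ∈ T, F.mul h a (b i) :=
  map_sum (F.mulₗ h a) b T

theorem sum_mul {ι : Type*} {α β γ : Γ} (h : G.mul α β = some γ) (a : ι → E α)
    (T : Finset ι) (b : E β) :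
    F.mul h (∑ i ∈ T, a i) b = ∑ i ∈ T, F.mul h (a i) b :=
  map_sum ((F.mulₗ h).flip b) a T

theorem star_sum {ι : Type*} {γ : Γ} (T : Finset ι) (a : ι → E γ) :
    F.star (∑ i ∈ T, a i) = ∑ i ∈ T, F.star (a i) :=
  map_sum F.starₗ a T

@[simp] theorem mul_castE_left {α' α β γ : Γ} (e : α' = α) (h : G.mul α β = some γ)
    (a : E α') (b : E β) : F.mul h (castE e a) b = F.mul (e ▸ h) a b := by
  subst e; rfl

@[simp] theorem mul_castE_right {β' α β γ : Γ} (e : β' = β) (h : G.mul α β = some γ)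
    (a : E α) (b : E β') : F.mul h a (castE e b) = F.mul (e ▸ h) a b := by
  subst e; rfl

@[simp] theorem castE_mul {α β γ γ' : Γ} (e : γ = γ') (h : G.mul α β = some γ)
    (a : E α) (b : E β) : castE e (F.mul h a b) = F.mul (e ▸ h) a b := by
  subst e; rfl

@[simp] theorem star_castE {α' α : Γ} (e : α' = α) (a : E α') :
    F.star (castE e a) = castE (congrArg G.inv e) (F.star a) := by
  subst e; rfl

theorem starSec_inv (f : ∀ γ, E γ) (α : Γ) : F.starSec f (G.inv α) = F.star (f α) := by
  have key : ∀ {a b : Γ} (h : a = b), castE (congrArg G.inv h) (F.star (f a)) = F.star (f b) := by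
    rintro a b rfl; rfl
  exact key (G.inv_inv α)

theorem conv_eq_sum_of_bijective {ι : Type*} {δ : Γ} (c d : ∀ γ, E γ)
    (e : ι → {p : Γ × Γ // G.mul p.1 p.2 = some δ}) (he : Function.Bijective e)
    (T : Finset ι) (hT : ∀ i ∉ T, F.mul (e i).2 (c (e i).1.1) (d (e i).1.2) = 0) :
    F.conv c d δ = ∑ i ∈ T, F.mul (e i).2 (c (e i).1.1) (d (e i).1.2) := by
  rw [conv, ← (Equiv.ofBijective e he).tsum_eq]
  exact tsum_eq_sum hT

/-- `E (s x)` under a new name, so that it can carry the C⋆-algebra structure given by `F`. -/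
def UnitFibre (_F : FellBundle G E) (x : Γ) : Type _ := E (G.s x)

namespace UnitFibre

variable (x : Γ)

instance : NormedAddCommGroup (F.UnitFibre x) := inferInstanceAs (NormedAddCommGroup (E (G.s x)))
instance : NormedSpace ℂ (F.UnitFibre x) := inferInstanceAs (NormedSpace ℂ (E (G.s x)))
instance : CompleteSpace (F.UnitFibre x) := inferInstanceAs (CompleteSpace (E (G.s x)))

instance : NonUnitalNormedRing (F.UnitFibre x) :=
  { (inferInstance : NormedAddCommGroup (F.UnitFibre x)) with
    mul := F.mul (G.mul_s_s x)
    left_distrib := F.mul_add _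
    right_distrib := F.add_mul _
    zero_mul := F.zero_mul _
    mul_zero := F.mul_zero _
    mul_assoc := F.mul_assoc _ _ _
    norm_mul_le := F.norm_mul_le _ }

instance : StarRing (F.UnitFibre x) where
  star a := castE (E := E) (G.inv_s x) (F.star (a : E (G.s x)))
  star_involutive := show ∀ a : E (G.s x), castE _ (F.star (castE _ (F.star a))) = a by
    intro a
    simp [F.star_star]
  star_mul := show ∀ a b : E (G.s x),
      castE _ (F.star (F.mul _ a b)) = F.mul _ (castE _ (F.star b)) (castE _ (F.star a)) by
    intro a b
    simp [F.star_mul]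
  star_add := show ∀ a b : E (G.s x),
      castE _ (F.star (a + b)) = castE _ (F.star a) + castE _ (F.star b) by
    intro a b
    rw [F.star_add, castE_add]

instance : CStarRing (F.UnitFibre x) where
  norm_mul_self_le := show ∀ a : E (G.s x),
      ‖a‖ * ‖a‖ ≤ ‖F.mul (G.mul_s_s x) (castE (G.inv_s x) (F.star a)) a‖ by
    intro a
    rw [← pow_two, ← F.cstar, F.mul_castE_left, ← norm_castE (G.s_s x), F.castE_mul]

instance : IsScalarTower ℂ (F.UnitFibre x) (F.UnitFibre x) := ⟨F.smul_mul _⟩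

instance : SMulCommClass ℂ (F.UnitFibre x) (F.UnitFibre x) :=
  ⟨fun z a b => (F.mul_smul _ z a b).symm⟩

instance : StarModule ℂ (F.UnitFibre x) where
  star_smul := show ∀ (z : ℂ) (a : E (G.s x)),
      castE _ (F.star (z • a)) = (starRingEnd ℂ z) • castE _ (F.star a) by
    intro z a
    rw [F.star_smul, castE_smul]

instance : NonUnitalCStarAlgebra (F.UnitFibre x) where

instance : PartialOrder (F.UnitFibre x) := CStarAlgebra.spectralOrder _

instance : StarOrderedRing (F.UnitFibre x) := CStarAlgebra.spectralOrderedRing _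

/-- By `exists_sq`, `b* b` is of the form `a* a` with `a` in the unit fibre. -/
theorem star_mul_self_nonneg {β : Γ} (h : G.mul (G.inv β) β = some (G.s x)) (b : E β) :
    (0 : F.UnitFibre x) ≤ F.mul h (F.star b) b := by
  obtain ⟨a, ha⟩ := F.exists_sq b
  have hs : G.s β = G.s x := by simpa only [G.s_s] using (G.s_mul h).symm
  let a' : F.UnitFibre x := castE (E := E) hs a
  have key : F.mul h (F.star b) b = Star.star a' * a' := by
    change _ = F.mul (G.mul_s_s x) (castE (G.inv_s x) (F.star (castE hs a))) (castE hs a)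
    rw [← F.castE_mul hs (G.inv_mul β), ← ha]
    simp
  rw [key]
  exact _root_.star_mul_self_nonneg _

end UnitFibre

section Pairing

variable (x : Γ) (T : Finset {β : Γ // G.s β = G.s x})

def starPairing :
    (∀ β : {β : Γ // G.s β = G.s x}, E β.1) →ₗ⋆[ℂ]
      (∀ β : {β : Γ // G.s β = G.s x}, E β.1) →ₗ[ℂ] F.UnitFibre x :=
  LinearMap.mk₂'ₛₗ (starRingEnd ℂ) (RingHom.id ℂ)
    (fun u w => ∑ β ∈ T, F.mul (G.inv_mul_of_s_eq β.2) (F.star (u β)) (w β))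
    (fun u u' w => by
      simp only [Pi.add_apply, F.star_add, F.add_mul]
      exact Finset.sum_add_distrib)
    (fun z u w => by
      simp only [Pi.smul_apply, F.star_smul, F.smul_mul]
      exact Finset.smul_sum.symm)
    (fun u w w' => by
      simp only [Pi.add_apply, F.mul_add]
      exact Finset.sum_add_distrib)
    (fun z u w => by
      simp only [Pi.smul_apply, F.mul_smul]
      exact Finset.smul_sum.symm)

theorem starPairing_self_nonneg (u : ∀ β : {β : Γ // G.s β = G.s x}, E β.1) :
    0 ≤ F.starPairing x T u u :=
  Finset.sum_nonneg fun β _ => UnitFibre.star_mul_self_nonneg F x _ (u β)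

end Pairing

section FibreIdentities

variable {α β γ : Γ} (hαβ : G.mul α β = some γ) (a : E α) (y : E γ)

theorem mul_star_mul_star (h : G.mul (G.inv β) β = some (G.s γ)) (c : E β) :
    F.mul h (F.star (F.mul (G.inv_mul_eq_of_mul_eq hαβ) (F.star a) y)) c =
      F.mul (G.inv_mul γ) (F.star y) (F.mul hαβ a c) := by
  rw [F.star_mul, F.star_star, F.mul_castE_right]
  exact F.mul_assoc _ hαβ _ _ _ _

theorem mul_mul_star (h : G.mul (G.inv β) β = some (G.s γ)) (c : E β) :
    F.mul h (F.star c) (F.mul (G.inv_mul_eq_of_mul_eq hαβ) (F.star a) y) =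
      F.mul (G.inv_mul γ) (F.star (F.mul hαβ a c)) y := by
  rw [F.star_mul]
  exact (F.mul_assoc _ _ _ _ _ _).symm

theorem mul_star_mul_star_self (h : G.mul (G.inv β) β = some (G.s γ))
    (hr : G.mul α (G.inv α) = some (G.r γ)) :
    F.mul h (F.star (F.mul (G.inv_mul_eq_of_mul_eq hαβ) (F.star a) y))
        (F.mul (G.inv_mul_eq_of_mul_eq hαβ) (F.star a) y) =
      F.mul (G.inv_mul γ) (F.star y) (F.mul (G.r_unit γ) (F.mul hr a (F.star a)) y) := by
  rw [F.mul_star_mul_star hαβ, F.mul_assoc hr (G.inv_mul_eq_of_mul_eq hαβ)]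

end FibreIdentities

section Convolution

variable {γ : Γ} (T : Finset {β : Γ // G.s β = G.s γ}) (c d : ∀ γ, E γ)

theorem conv_eq_sum_mulInv (hT : ∀ β ∉ T, d β.1 = 0) :
    F.conv c d γ = ∑ β ∈ T, F.mul (G.mulInv_mul β.2) (c (G.mulInv γ β.1 β.2)) (d β.1) :=
  F.conv_eq_sum_of_bijective c d _ (G.bijective_mulInv_pair γ) T fun β hβ => by simp [hT β hβ]

theorem conv_starSec_eq_sum (hT : ∀ β ∉ T, c (G.mulInv γ β.1 β.2) = 0) :
    F.conv c (F.starSec c) (G.r γ) = ∑ β ∈ T, F.mul (G.mulInv_mul_inv γ β.2)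
      (c (G.mulInv γ β.1 β.2)) (F.star (c (G.mulInv γ β.1 β.2))) := by
  rw [F.conv_eq_sum_of_bijective c _ _ (G.bijective_mulInv_inv_pair γ) T fun β hβ => by
    simp [hT β hβ]]
  simp only [F.starSec_inv]

theorem conv_starSec_self_eq_starPairing (hT : ∀ β ∉ T, d β.1 = 0) :
    F.conv (F.starSec d) d (G.s γ) = F.starPairing γ T (fun β => d β.1) (fun β => d β.1) := by
  rw [F.conv_eq_sum_of_bijective _ d _ (G.bijective_inv_pair γ) T fun β hβ => by simp [hT β hβ]]
  simp only [F.starSec_inv]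
  rfl

def starLeftMul (y : E γ) (β : {β : Γ // G.s β = G.s γ}) : E β.1 :=
  F.mul (G.inv_mul_eq_of_mul_eq (G.mulInv_mul β.2)) (F.star (c (G.mulInv γ β.1 β.2))) y

variable (y : E γ)

theorem starPairing_starLeftMul_left :
    F.starPairing γ T (F.starLeftMul c y) (fun β => d β.1) = F.mul (G.inv_mul γ) (F.star y)
      (∑ β ∈ T, F.mul (G.mulInv_mul β.2) (c (G.mulInv γ β.1 β.2)) (d β.1)) := by
  rw [F.mul_sum]
  exact Finset.sum_congr rfl fun β _ => F.mul_star_mul_star _ _ _ _ _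

theorem starPairing_starLeftMul_right :
    F.starPairing γ T (fun β => d β.1) (F.starLeftMul c y) = F.mul (G.inv_mul γ)
      (F.star (∑ β ∈ T, F.mul (G.mulInv_mul β.2) (c (G.mulInv γ β.1 β.2)) (d β.1))) y := by
  rw [F.star_sum, F.sum_mul]
  exact Finset.sum_congr rfl fun β _ => F.mul_mul_star _ _ _ _ _

theorem starPairing_starLeftMul_self :
    F.starPairing γ T (F.starLeftMul c y) (F.starLeftMul c y) =
      F.mul (G.inv_mul γ) (F.star y) (F.mul (G.r_unit γ) (∑ β ∈ T, F.mul (G.mulInv_mul_inv γ β.2)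
        (c (G.mulInv γ β.1 β.2)) (F.star (c (G.mulInv γ β.1 β.2)))) y) := by
  rw [F.sum_mul, F.mul_sum]
  exact Finset.sum_congr rfl fun β _ => F.mul_star_mul_star_self (G.mulInv_mul β.2) _ _ _ _

end Convolution

theorem norm_star_mul_mul_le {γ : Γ} (p : E (G.r γ)) (y : E γ) :
    ‖F.mul (G.inv_mul γ) (F.star y) (F.mul (G.r_unit γ) p y)‖ ≤ ‖p‖ * ‖y‖ ^ 2 := by
  refine (F.norm_mul_le _ _ _).trans ?_
  rw [F.norm_star]
  nlinarith [F.norm_mul_le (G.r_unit γ) p y, norm_nonneg y]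

theorem norm_conv_sq_le (f g : ∀ γ, E γ)
    (hf : {γ | f γ ≠ 0}.Finite) (hg : {γ | g γ ≠ 0}.Finite) (γ : Γ) :
    ‖F.conv f g γ‖ ^ 2 ≤ ‖F.conv f (F.starSec f) (G.r γ)‖ * ‖F.conv (F.starSec g) g (G.s γ)‖ := by
  classical
  obtain ⟨T, hT⟩ : ∃ T : Finset {β : Γ // G.s β = G.s γ},
      ∀ β ∉ T, g β.1 = 0 ∧ f (G.mulInv γ β.1 β.2) = 0 := by
    refine ⟨((hg.preimage Subtype.val_injective.injOn).union
      (hf.preimage (G.mulInv_injective γ).injOn)).toFinset, fun β hβ => ?_⟩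
    simpa [not_or] using hβ
  have hvg := F.starPairing_starLeftMul_left T f g (F.conv f g γ)
  have hgv := F.starPairing_starLeftMul_right T f g (F.conv f g γ)
  have hvv := F.starPairing_starLeftMul_self T f (F.conv f g γ)
  rw [← F.conv_eq_sum_mulInv T f g fun β hβ => (hT β hβ).1] at hvg hgv
  rw [← F.conv_starSec_eq_sum T f fun β hβ => (hT β hβ).2] at hvv
  have hQ := F.conv_starSec_self_eq_starPairing T g fun β hβ => (hT β hβ).1
  set x := F.conv f g γ
  set P := F.conv f (F.starSec f) (G.r γ)
  set Q := F.conv (F.starSec g) g (G.s γ)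
  have cs := norm_sq_le_mul_of_sesquilinear (F.starPairing γ T) (F.starPairing_self_nonneg γ T)
    (hgv.trans hvg.symm) (hvg ▸ UnitFibre.star_mul_self_nonneg F γ _ x)
  rw [hvg, hvv, ← hQ] at cs
  -- the norms in `cs` are those of `F.UnitFibre γ`, definitionally those of `E (G.s γ)`
  change ‖F.mul (G.inv_mul γ) (F.star x) x‖ ^ 2 ≤
    ‖F.mul (G.inv_mul γ) (F.star x) (F.mul (G.r_unit γ) P x)‖ * ‖Q‖ at cs
  rw [F.cstar] at cs
  have hV := mul_le_mul_of_nonneg_right (F.norm_star_mul_mul_le P x) (norm_nonneg Q)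
  rcases (sq_nonneg ‖x‖).eq_or_lt with hx | hx
  · rw [← hx]
    positivity
  · exact le_of_mul_le_mul_left (by nlinarith) hx

end FellBundle

/-- Cauchy-Schwarz for convolution of finitely supported sections:
`‖fg(γ)‖ ≤ √(‖ff*(r γ)‖ ‖g*g(s γ)‖)`. -/
theorem stmt11 (F : FellBundle G E) (f g : ∀ γ, E γ)
    (hf : {γ | f γ ≠ 0}.Finite) (hg : {γ | g γ ≠ 0}.Finite) (γ : Γ) :
    ‖F.conv f g γ‖ ≤
      Real.sqrt (‖F.conv f (F.starSec f) (G.r γ)‖ * ‖F.conv (F.starSec g) g (G.s γ)‖) :=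
  Real.le_sqrt_of_sq_le (F.norm_conv_sq_le f g hf hg γ)
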